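/- Let M be a finite satisfiable cyclic multipath (a finite weighted constraint graph connecting n boundary variables on each of its two ends, ends identified by variable index) of length ℓ, and let G be its collapse (the composition of its constituent constraints). If the infinite iteration (G)^ω is satisfiable over ℤ, then (M)^ω is satisfiable over ℤ. -/

import Mathlib

/-- Constraint evaluation for an arc with strictness flag. -/
def CmpB {n : ℕ} (σ τ : Fin n → ℤ) (u v : Fin n ⊕ Fin n) (b : Bool) : Prop :=
  if b then Sum.elim σ τ v < Sum.elim σ τ u else Sum.elim σ τ v ≤ Sum.elim σ τ u

/-- Satisfaction of a monotonicity constraint by a pair of assignments. -/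
def MCSat {n : ℕ} (G : (Fin n ⊕ Fin n) → (Fin n ⊕ Fin n) → Bool → Prop)
    (σ τ : Fin n → ℤ) : Prop :=
  ∀ u v b, G u v b → CmpB σ τ u v b

/-!
Every integer solution of one copy of `M` bounds the number `d` of strict arcs on any path
between its end points, so multiplying the given solution of `(G)^ω` by a constant `C > d`
turns each strict inequality `y < x` of `G` into `C y + d ≤ C x`: the scaled boundary values
respect every path of `M`. A system of difference constraints that has some solution can then
be solved with any such boundary values, by taking at each node the weight of the lightest path
from an auxiliary source. The solutions obtained copy by copy agree on the shared boundary
levels and glue to a solution of `(M)^ω`.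
-/

section Potential

variable {α ι : Type*} (E : α → α → ℕ → Prop)

def IsPotential (p : α → ℤ) : Prop :=
  ∀ x y w, E x y w → p y + w ≤ p x

inductive WeightedPath : α → α → ℕ → Prop
  | refl (x : α) : WeightedPath x x 0
  | tail {x y z : α} {d w : ℕ} : WeightedPath x y d → E y z w → WeightedPath x z (d + w)

/-- The candidate values at `x` of the lightest path from an auxiliary source joined to every
node `x` with weight `p₀ x` and to every boundary node `bnd u` with weight `a u`. -/
def sourcePathWeights (p₀ : α → ℤ) (bnd : ι → α) (a : ι → ℤ) (x : α) : Set ℤ :=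
  insert (p₀ x) {m | ∃ u d, WeightedPath E (bnd u) x d ∧ m = a u - d}

variable {E} {p₀ : α → ℤ} {bnd : ι → α} {a : ι → ℤ}

theorem IsPotential.add_le_of_weightedPath (hp : IsPotential E p₀) {x y : α} {d : ℕ}
    (h : WeightedPath E x y d) : p₀ y + d ≤ p₀ x := by
  induction h with
  | refl => simp
  | tail _ he ih => have := hp _ _ _ he; push_cast; linarith

theorem IsPotential.add_const (hp : IsPotential E p₀) (c : ℤ) :
    IsPotential E (fun x => p₀ x + c) := by
  intro x y w h
  have := hp x y w h
  linarith

theorem bddBelow_sourcePathWeights (hp₀ : IsPotential E p₀) {L : ℤ}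
    (hL : ∀ u, L ≤ a u - p₀ (bnd u)) (x : α) : BddBelow (sourcePathWeights E p₀ bnd a x) := by
  refine ⟨p₀ x + min L 0, ?_⟩
  rintro m (rfl | ⟨u, d, h, rfl⟩)
  · simp
  · have := hp₀.add_le_of_weightedPath h
    have := hL u
    have := min_le_left L 0
    linarith

theorem isPotential_sInf_sourcePathWeights (hp₀ : IsPotential E p₀)
    (hbdd : ∀ x, BddBelow (sourcePathWeights E p₀ bnd a x)) :
    IsPotential E (fun x => sInf (sourcePathWeights E p₀ bnd a x)) := by
  intro x y w hxy
  refine le_csInf (Set.insert_nonempty _ _) ?_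
  rintro m (rfl | ⟨u, d, h, rfl⟩)
  · have := csInf_le (hbdd y) (Set.mem_insert _ _)
    have := hp₀ x y w hxy
    linarith
  · have := csInf_le (hbdd y)
      (Set.mem_insert_of_mem _ ⟨u, d + w, h.tail hxy, rfl⟩)
    push_cast at this
    linarith

theorem sInf_sourcePathWeights_bnd (hbdd : ∀ x, BddBelow (sourcePathWeights E p₀ bnd a x))
    (ha : ∀ u, a u ≤ p₀ (bnd u))
    (hcompat : ∀ u w d, WeightedPath E (bnd w) (bnd u) d → a u + d ≤ a w)
    (u : ι) : sInf (sourcePathWeights E p₀ bnd a (bnd u)) = a u := by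
  refine le_antisymm ?_ (le_csInf (Set.insert_nonempty _ _) ?_)
  · exact csInf_le (hbdd _) (Set.mem_insert_of_mem _ ⟨u, 0, .refl _, by simp⟩)
  · rintro m (rfl | ⟨w, d, h, rfl⟩)
    · exact ha u
    · have := hcompat u w d h
      linarith

theorem IsPotential.exists_isPotential_eq_of_compatible [Finite ι] (hp₀ : IsPotential E p₀)
    (hcompat : ∀ u w d, WeightedPath E (bnd w) (bnd u) d → a u + d ≤ a w) :
    ∃ p, IsPotential E p ∧ ∀ u, p (bnd u) = a u := by
  obtain ⟨K, hK⟩ := Finite.exists_le fun u => a u - p₀ (bnd u)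
  have hq := hp₀.add_const K
  obtain ⟨L, hL⟩ := Finite.exists_ge fun u => a u - (p₀ (bnd u) + K)
  have hbdd := bddBelow_sourcePathWeights hq hL
  refine ⟨_, isPotential_sInf_sourcePathWeights hq hbdd,
    sInf_sourcePathWeights_bnd hbdd (fun u => ?_) hcompat⟩
  have := hK u
  linarith

theorem IsPotential.exists_weightedPath_weight_lt [Finite ι] (hp₀ : IsPotential E p₀) :
    ∃ C : ℕ, ∀ u w d, WeightedPath E (bnd w) (bnd u) d → d < C := by
  obtain ⟨K, hK⟩ := Finite.exists_le fun uw : ι × ι => p₀ (bnd uw.2) - p₀ (bnd uw.1)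
  refine ⟨K.toNat + 1, fun u w d h => ?_⟩
  have := hp₀.add_le_of_weightedPath h
  have := hK (u, w)
  simp only at this
  omega

end Potential

theorem toNat_decide_pos_le (d : ℕ) : (decide (0 < d)).toNat ≤ d := by
  rcases Nat.eq_zero_or_pos d with rfl | hd <;> simp [*]
  exact hd

theorem le_mul_toNat_decide_pos {d C : ℕ} (h : d < C) :
    d ≤ C * (decide (0 < d)).toNat := by
  rcases Nat.eq_zero_or_pos d with rfl | hd <;> simp [*]
  exact h.le

section Multipath

variable {n : ℕ}

def pairNode (s t : ℕ) : Fin n ⊕ Fin n → ℕ × Fin n :=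
  Sum.elim (fun i => (s, i)) (fun i => (t, i))

theorem sum_elim_eq_uncurry_pairNode (ρ : ℕ → Fin n → ℤ) (s t : ℕ) (u : Fin n ⊕ Fin n) :
    Sum.elim (ρ s) (ρ t) u = Function.uncurry ρ (pairNode s t u) := by
  cases u <;> rfl

theorem cmpB_iff {σ τ : Fin n → ℤ} {u v : Fin n ⊕ Fin n} {b : Bool} :
    CmpB σ τ u v b ↔ Sum.elim σ τ v + b.toNat ≤ Sum.elim σ τ u := by
  cases b <;> simp [CmpB]

def multipathArc (ℓ : ℕ) (Gs : ℕ → (Fin n ⊕ Fin n) → (Fin n ⊕ Fin n) → Bool → Prop)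
    (x y : ℕ × Fin n) (w : ℕ) : Prop :=
  ∃ t < ℓ, ∃ u v b, Gs t u v b ∧ pairNode t (t + 1) u = x ∧ pairNode t (t + 1) v = y ∧
    b.toNat = w

variable {ℓ : ℕ} {Gs : ℕ → (Fin n ⊕ Fin n) → (Fin n ⊕ Fin n) → Bool → Prop}

theorem isPotential_multipathArc_iff {ρ : ℕ → Fin n → ℤ} :
    IsPotential (multipathArc ℓ Gs) (Function.uncurry ρ) ↔
      ∀ t < ℓ, MCSat (Gs t) (ρ t) (ρ (t + 1)) := by
  simp only [IsPotential, MCSat, cmpB_iff, sum_elim_eq_uncurry_pairNode]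
  constructor
  · exact fun h t ht u v b hG => h _ _ _ ⟨t, ht, u, v, b, hG, rfl, rfl, rfl⟩
  · rintro h x y w ⟨t, ht, u, v, b, hG, rfl, rfl, rfl⟩
    exact h t ht u v b hG

theorem cmpB_of_weightedPath_multipathArc {ρ : ℕ → Fin n → ℤ}
    (hρ : ∀ t < ℓ, MCSat (Gs t) (ρ t) (ρ (t + 1))) {u w : Fin n ⊕ Fin n} {d : ℕ}
    (h : WeightedPath (multipathArc ℓ Gs) (pairNode 0 ℓ w) (pairNode 0 ℓ u) d) :
    CmpB (ρ 0) (ρ ℓ) w u (decide (0 < d)) := by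
  have := (isPotential_multipathArc_iff.2 hρ).add_le_of_weightedPath h
  have := toNat_decide_pos_le d
  rw [cmpB_iff, sum_elim_eq_uncurry_pairNode, sum_elim_eq_uncurry_pairNode]
  omega

end Multipath

theorem scaled_add_le_of_cmpB {n : ℕ} {σ τ : Fin n → ℤ} {u w : Fin n ⊕ Fin n} {d C : ℕ}
    (h : CmpB σ τ w u (decide (0 < d))) (hdC : d < C) :
    C * Sum.elim σ τ u + d ≤ C * Sum.elim σ τ w := by
  rw [cmpB_iff] at h
  have : (d : ℤ) ≤ C * (decide (0 < d)).toNat := mod_cast le_mul_toNat_decide_pos hdC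
  calc C * Sum.elim σ τ u + d
      ≤ C * (Sum.elim σ τ u + (decide (0 < d)).toNat) := by linarith
    _ ≤ C * Sum.elim σ τ w := by gcongr

theorem glue_succ {X : Type*} {ℓ : ℕ} (hℓ : 0 < ℓ) {P : ℕ → ℕ → X}
    (hP : ∀ k, P k ℓ = P (k + 1) 0) (m : ℕ) :
    P ((m + 1) / ℓ) ((m + 1) % ℓ) = P (m / ℓ) (m % ℓ + 1) := by
  have hm := Nat.mod_add_div m ℓ
  have hlt := Nat.mod_lt m hℓ
  rcases Nat.lt_or_ge (m % ℓ + 1) ℓ with h | h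
  · obtain ⟨hdiv, hmod⟩ :=
      (Nat.div_mod_unique (a := m + 1) (d := m / ℓ) (c := m % ℓ + 1) hℓ).2 ⟨by omega, h⟩
    rw [hdiv, hmod]
  · obtain ⟨hdiv, hmod⟩ := (Nat.div_mod_unique (a := m + 1) (d := m / ℓ + 1) (c := 0) hℓ).2
      ⟨by rw [Nat.mul_add]; omega, hℓ⟩
    rw [hdiv, hmod, ← hP, show m % ℓ + 1 = ℓ by omega]

/-- Let M = G₁ … G_ℓ be a finite satisfiable cyclic multipath (constituents
`Gs 0, …, Gs (ℓ−1)`), and let `Gcol` be its collapse: the (consequence-closed)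
constraint containing exactly those order constraints entailed by M between its
two ends. If (Gcol)^ω is satisfiable over ℤ, then (M)^ω is satisfiable over ℤ. -/
theorem stmt_19 (n ℓ : ℕ) (hℓ : 1 ≤ ℓ)
    (Gs : ℕ → (Fin n ⊕ Fin n) → (Fin n ⊕ Fin n) → Bool → Prop)
    (hsatM : ∃ ρ : ℕ → Fin n → ℤ, ∀ t < ℓ, MCSat (Gs t) (ρ t) (ρ (t + 1)))
    (Gcol : (Fin n ⊕ Fin n) → (Fin n ⊕ Fin n) → Bool → Prop)
    (hcol : ∀ u v b, Gcol u v b ↔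
      ∀ ρ : ℕ → Fin n → ℤ, (∀ t < ℓ, MCSat (Gs t) (ρ t) (ρ (t + 1))) →
        CmpB (ρ 0) (ρ ℓ) u v b)
    (hω : ∃ σ : ℕ → Fin n → ℤ, ∀ k, MCSat Gcol (σ k) (σ (k + 1))) :
    ∃ ρ : ℕ → Fin n → ℤ, ∀ t, MCSat (Gs (t % ℓ)) (ρ t) (ρ (t + 1)) := by
  obtain ⟨ρ₀, hρ₀⟩ := hsatM
  obtain ⟨σ, hσ⟩ := hω
  have hp₀ := isPotential_multipathArc_iff.2 hρ₀
  obtain ⟨C, hC⟩ := hp₀.exists_weightedPath_weight_lt (bnd := pairNode 0 ℓ)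
  have hcompat (k : ℕ) u w d
      (h : WeightedPath (multipathArc ℓ Gs) (pairNode 0 ℓ w) (pairNode 0 ℓ u) d) :
      C * Sum.elim (σ k) (σ (k + 1)) u + d ≤ C * Sum.elim (σ k) (σ (k + 1)) w :=
    have hG := (hcol w u _).2 fun _ hρ => cmpB_of_weightedPath_multipathArc hρ h
    scaled_add_le_of_cmpB (hσ k w u _ hG) (hC u w d h)
  choose p hp hpbnd using fun k => hp₀.exists_isPotential_eq_of_compatible (hcompat k)
  have hglue : ∀ k, (fun i => p k (ℓ, i)) = fun i => p (k + 1) (0, i) := fun k => funext fun i =>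
    (hpbnd k (.inr i)).trans (hpbnd (k + 1) (.inl i)).symm
  refine ⟨fun m i => p (m / ℓ) (m % ℓ, i), fun m => ?_⟩
  beta_reduce
  rw [glue_succ (P := fun k t i => p k (t, i)) hℓ hglue]
  exact isPotential_multipathArc_iff (ρ := fun t i => p (m / ℓ) (t, i)).1 (hp (m / ℓ)) _
    (Nat.mod_lt m hℓ)
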